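/- Let c be a coefficient, μ > 0 and λ ∈ ℝ with c(y)·(λ − c(y)μ²) > 1 for a.e. y ∈ [0,H]. Let u be a nontrivial Dirichlet solution of the reduced problem with flux v. Then the set Z' := {y ∈ [0,H] : v(y) = 0} is nonempty and compact, and inf_{y∈[0,H]} [u(y)² + v(y)²] = min_{y∈Z'} u(y)². -/

import Mathlib

/-! The amplitude `W = u² + v²` satisfies `W' = 2 u u' (1 - c (λ - c μ²))` a.e., so under
`c (λ - c μ²) > 1` it decreases wherever `u u' ≥ 0`, i.e. where `u` has the sign of the flux
`v = c u'`. Let `x` minimise `W` on `[0, H]`. If `u(x) v(x) ≥ 0`, then moving right from `x`,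
`u` moves away from `0` with the sign of `v` as long as `v ≠ 0`; since `u(H) = 0`, `v` must
vanish first at some `z`, and there `u(z)² = W(z) ≤ W(x)`. If `u(x) v(x) ≤ 0`, the same holds
to the left, by the symmetry `y ↦ H - y`, `v ↦ -v` of the problem. Hence
`min_{Z'} u² ≤ min W ≤ min_{Z'} u²`. -/

open MeasureTheory Set Filter Topology

noncomputable section

/-- `u` (with flux `v = c·u'` and weak derivative `g = u'`) is a solution of the reduced
problem `(c u')' + (λ - c μ²) u = 0` on the interval `[a, b]`:
`u` is absolutely continuous with derivative `g ∈ L²`, the flux `v` agrees a.e. with `c·g`,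
and `v` is absolutely continuous with derivative `(c μ² - λ)·u`. -/
def IsReducedSolutionOn (a b : ℝ) (c : ℝ → ℝ) (μ lam : ℝ) (u v g : ℝ → ℝ) : Prop :=
  IntervalIntegrable g volume a b ∧
  IntervalIntegrable (fun t => g t ^ 2) volume a b ∧
  (∀ y ∈ Set.Icc a b, u y = u a + ∫ t in a..y, g t) ∧
  (∀ᵐ y ∂volume.restrict (Set.Ioo a b), v y = c y * g y) ∧
  IntervalIntegrable (fun t => (c t * μ ^ 2 - lam) * u t) volume a b ∧
  (∀ y ∈ Set.Icc a b, v y = v a + ∫ t in a..y, (c t * μ ^ 2 - lam) * u t)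

/-- A coefficient on `[0, H]`: measurable and bounded between `cm` and `cM`. -/
def IsCoeff (H cm cM : ℝ) (c : ℝ → ℝ) : Prop :=
  Measurable c ∧ ∀ y ∈ Set.Icc (0 : ℝ) H, cm ≤ c y ∧ c y ≤ cM

theorem sq_add_integral_sub_sq {f : ℝ → ℝ} {a b : ℝ} (hf : IntervalIntegrable f volume a b)
    (C : ℝ) :
    (C + ∫ t in a..b, f t) ^ 2 - C ^ 2 = ∫ t in a..b, 2 * (C + ∫ s in a..t, f s) * f t := by
  set F : ℝ → ℝ := fun x => C + ∫ s in a..x, f s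
  have hF : AbsolutelyContinuousOnInterval F a b :=
    (LipschitzWith.const C).lipschitzOnWith.absolutelyContinuousOnInterval.add
      (hf.absolutelyContinuousOnInterval_intervalIntegral left_mem_uIcc)
  have key := hF.integral_deriv_mul_eq_sub hF
  simp only [F, intervalIntegral.integral_same, add_zero] at key
  rw [sq, sq, ← key]
  refine intervalIntegral.integral_congr_ae ?_
  filter_upwards [hf.ae_hasDerivAt_integral] with t ht htab
  rw [((ht (uIoc_subset_uIcc htab) a left_mem_uIcc).const_add C).deriv]
  ring

theorem eq_add_integral_of_mem {F f : ℝ → ℝ} {a b p q : ℝ}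
    (hf : IntervalIntegrable f volume a b) (hF : ∀ y ∈ Icc a b, F y = F a + ∫ t in a..y, f t)
    (hp : p ∈ Icc a b) (hq : q ∈ Icc a b) : F q = F p + ∫ t in p..q, f t := by
  have hint {y} (hy : y ∈ Icc a b) : IntervalIntegrable f volume a y :=
    hf.mono_set (uIcc_subset_uIcc left_mem_uIcc (Icc_subset_uIcc hy))
  rw [hF q hq, hF p hp, add_assoc,
    intervalIntegral.integral_add_adjacent_intervals (hint hp) ((hint hp).symm.trans (hint hq))]

theorem continuousOn_of_eq_add_integral {F f : ℝ → ℝ} {a b : ℝ}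
    (hf : IntervalIntegrable f volume a b) (hF : ∀ y ∈ Icc a b, F y = F a + ∫ t in a..y, f t) :
    ContinuousOn F (Icc a b) :=
  ((continuousOn_const.add (intervalIntegral.continuousOn_primitive_interval' hf
    left_mem_uIcc)).mono Icc_subset_uIcc).congr hF

theorem sq_sub_sq_eq_integral {F f : ℝ → ℝ} {a b p q : ℝ}
    (hf : IntervalIntegrable f volume a b) (hF : ∀ y ∈ Icc a b, F y = F a + ∫ t in a..y, f t)
    (hp : p ∈ Icc a b) (hq : q ∈ Icc a b) :
    F q ^ 2 - F p ^ 2 = ∫ t in p..q, 2 * F t * f t := by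
  have hpq := sq_add_integral_sub_sq
    (hf.mono_set (uIcc_subset_uIcc (Icc_subset_uIcc hp) (Icc_subset_uIcc hq))) (F p)
  rw [← eq_add_integral_of_mem hf hF hp hq] at hpq
  rw [hpq]
  refine intervalIntegral.integral_congr fun t ht => ?_
  rw [eq_add_integral_of_mem hf hF hp (uIcc_subset_Icc hp hq ht)]

theorem intervalIntegral_pos_of_ae_pos {f : ℝ → ℝ} {a b : ℝ}
    (hfi : IntervalIntegrable f volume a b) (hab : a < b)
    (hpos : ∀ᵐ x ∂volume.restrict (Ioo a b), 0 < f x) : 0 < ∫ x in a..b, f x := by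
  have hpos' : ∀ᵐ x ∂volume.restrict (uIoc a b), 0 < f x := by
    rwa [uIoc_of_le hab.le, ← Measure.restrict_congr_set Ioo_ae_eq_Ioc]
  rw [intervalIntegral.integral_pos_iff_support_of_nonneg_ae' (hpos'.mono fun x hx => hx.le) hfi]
  refine ⟨hab, ((Measure.measure_Ioo_pos _).mpr hab).trans_le (measure_mono_ae ?_)⟩
  rw [ae_restrict_iff' measurableSet_Ioo] at hpos
  filter_upwards [hpos] with x hx hxI
  exact ⟨(hx hxI).ne', Ioo_subset_Ioc_self hxI⟩

theorem ae_restrict_comp_const_sub {P : ℝ → Prop} {s : Set ℝ} (hs : MeasurableSet s) (d : ℝ)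
    (h : ∀ᵐ y ∂volume.restrict s, P y) :
    ∀ᵐ y ∂volume.restrict ((fun y => d - y) ⁻¹' s), P (d - y) :=
  ((volume.measurePreserving_sub_left d).restrict_preimage hs).quasiMeasurePreserving.ae h

theorem ContinuousOn.isCompact_Icc_sep_eq_zero {f : ℝ → ℝ} {a b : ℝ}
    (hf : ContinuousOn f (Icc a b)) : IsCompact {y ∈ Icc a b | f y = 0} :=
  isCompact_Icc.of_isClosed_subset
    (hf.preimage_isClosed_of_isClosed isClosed_Icc isClosed_singleton) (sep_subset _ _)

theorem pos_of_forall_ne_zero_of_continuousOn {f : ℝ → ℝ} {x t : ℝ} (hxt : x ≤ t)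
    (hf : ContinuousOn f (Icc x t)) (hx : 0 < f x) (hne : ∀ s ∈ Icc x t, f s ≠ 0) : 0 < f t := by
  by_contra! ht
  obtain ⟨s, hs, hfs⟩ := intermediate_value_Icc' hxt hf ⟨ht, hx.le⟩
  exact hne s hs hfs

namespace IsReducedSolutionOn

variable {a b : ℝ} {c : ℝ → ℝ} {μ lam : ℝ} {u v g : ℝ → ℝ}

theorem continuousOn_sol (h : IsReducedSolutionOn a b c μ lam u v g) :
    ContinuousOn u (Icc a b) :=
  continuousOn_of_eq_add_integral h.1 h.2.2.1

theorem continuousOn_flux (h : IsReducedSolutionOn a b c μ lam u v g) :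
    ContinuousOn v (Icc a b) :=
  continuousOn_of_eq_add_integral h.2.2.2.2.1 h.2.2.2.2.2

theorem neg (h : IsReducedSolutionOn a b c μ lam u v g) :
    IsReducedSolutionOn a b c μ lam (-u) (-v) (-g) := by
  obtain ⟨hg, hg2, hu, hvg, hw, hv⟩ := h
  refine ⟨hg.neg, by simpa only [Pi.neg_apply, neg_sq] using hg2, fun y hy => ?_, ?_,
    by simpa only [Pi.neg_def, Pi.neg_apply, mul_neg] using hw.neg, fun y hy => ?_⟩
  · simp only [Pi.neg_apply, intervalIntegral.integral_neg, hu y hy]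
    ring
  · filter_upwards [hvg] with t ht
    simp only [Pi.neg_apply, ht, mul_neg]
  · simp only [Pi.neg_apply, mul_neg, intervalIntegral.integral_neg, hv y hy]
    ring

theorem reflect (h : IsReducedSolutionOn a b c μ lam u v g) :
    IsReducedSolutionOn a b (fun y => c (a + b - y)) μ lam (fun y => u (a + b - y))
      (fun y => -v (a + b - y)) (fun y => -g (a + b - y)) := by
  obtain ⟨hg, hg2, hu, hvg, hw, hv⟩ := h
  have hmem {y : ℝ} (hy : y ∈ Icc a b) : a + b - y ∈ Icc a b :=
    ⟨by linarith [hy.2], by linarith [hy.1]⟩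
  have hb {y : ℝ} (hy : y ∈ Icc a b) : b ∈ Icc a b := ⟨hy.1.trans hy.2, le_rfl⟩
  have hvg' := ae_restrict_comp_const_sub measurableSet_Ioo (a + b) hvg
  rw [preimage_const_sub_Ioo, add_sub_cancel_right, add_sub_cancel_left] at hvg'
  refine ⟨?_, ?_, fun y hy => ?_, ?_, ?_, fun y hy => ?_⟩
  · simpa [Pi.neg_def] using (hg.comp_sub_left (a + b)).neg.symm
  · simpa using (hg2.comp_sub_left (a + b)).symm
  · have := eq_add_integral_of_mem hg hu (hmem hy) (hb hy)
    simp only [intervalIntegral.integral_neg, intervalIntegral.integral_comp_sub_left,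
      add_sub_cancel_left]
    linarith
  · filter_upwards [hvg'] with t ht
    rw [ht]
    ring
  · simpa using (hw.comp_sub_left (a + b)).symm
  · have := eq_add_integral_of_mem hw hv (hmem hy) (hb hy)
    simp only [intervalIntegral.integral_comp_sub_left (fun t => (c t * μ ^ 2 - lam) * u t),
      add_sub_cancel_left]
    linarith

theorem ae_pos_of_flux_pos (h : IsReducedSolutionOn a b c μ lam u v g)
    (hc : ∀ y ∈ Icc a b, 0 < c y) {s t : ℝ} (hs : a ≤ s) (ht : t ≤ b)
    (hv : ∀ y ∈ Ioo s t, 0 < v y) : ∀ᵐ y ∂volume.restrict (Ioo s t), 0 < g y := by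
  filter_upwards [ae_restrict_mem measurableSet_Ioo,
    ae_restrict_of_ae_restrict_of_subset (Ioo_subset_Ioo hs ht) h.2.2.2.1] with y hy hvg
  have hvy := hv y hy
  rw [hvg] at hvy
  exact pos_of_mul_pos_right hvy (hc y ⟨hs.trans hy.1.le, hy.2.le.trans ht⟩).le

theorem lt_of_flux_pos (h : IsReducedSolutionOn a b c μ lam u v g)
    (hc : ∀ y ∈ Icc a b, 0 < c y) {s t : ℝ} (hs : s ∈ Icc a b) (ht : t ∈ Icc a b) (hst : s < t)
    (hv : ∀ y ∈ Ioo s t, 0 < v y) : u s < u t := by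
  rw [eq_add_integral_of_mem h.1 h.2.2.1 hs ht, lt_add_iff_pos_right]
  exact intervalIntegral_pos_of_ae_pos
    (h.1.mono_set (uIcc_subset_uIcc (Icc_subset_uIcc hs) (Icc_subset_uIcc ht))) hst
    (h.ae_pos_of_flux_pos hc hs.1 ht.2 hv)

theorem le_of_flux_pos (h : IsReducedSolutionOn a b c μ lam u v g)
    (hc : ∀ y ∈ Icc a b, 0 < c y) {s t : ℝ} (hs : s ∈ Icc a b) (ht : t ∈ Icc a b) (hst : s ≤ t)
    (hv : ∀ y ∈ Ioo s t, 0 < v y) : u s ≤ u t := by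
  rcases hst.eq_or_lt with rfl | hst
  · exact le_rfl
  · exact (h.lt_of_flux_pos hc hs ht hst hv).le

theorem amplitude_sub_amplitude (h : IsReducedSolutionOn a b c μ lam u v g) {p q : ℝ}
    (hp : p ∈ Icc a b) (hq : q ∈ Icc a b) (hpq : p ≤ q) :
    (u q ^ 2 + v q ^ 2) - (u p ^ 2 + v p ^ 2)
      = ∫ t in Ioo p q, 2 * (u t * g t) * (1 - c t * (lam - c t * μ ^ 2)) := by
  obtain ⟨hg, -, hu, hvg, hw, hv⟩ := h
  have hsub : uIcc p q ⊆ Icc a b := uIcc_subset_Icc hp hq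
  have hsub' : uIcc p q ⊆ uIcc a b := hsub.trans Icc_subset_uIcc
  have hug : IntervalIntegrable (fun t => 2 * u t * g t) volume p q :=
    (hg.mono_set hsub').continuousOn_mul
      ((continuousOn_const.mul (continuousOn_of_eq_add_integral hg hu)).mono hsub)
  have hvw : IntervalIntegrable (fun t => 2 * v t * ((c t * μ ^ 2 - lam) * u t)) volume p q :=
    (hw.mono_set hsub').continuousOn_mul
      ((continuousOn_const.mul (continuousOn_of_eq_add_integral hw hv)).mono hsub)
  rw [add_sub_add_comm, sq_sub_sq_eq_integral hg hu hp hq, sq_sub_sq_eq_integral hw hv hp hq,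
    ← intervalIntegral.integral_add hug hvw, intervalIntegral.integral_of_le hpq,
    integral_Ioc_eq_integral_Ioo]
  refine setIntegral_congr_ae measurableSet_Ioo ?_
  have hvg' := ae_restrict_of_ae_restrict_of_subset (Ioo_subset_Ioo hp.1 hq.2) hvg
  rw [ae_restrict_iff' measurableSet_Ioo] at hvg'
  filter_upwards [hvg'] with t ht htI
  rw [ht htI]
  ring

theorem amplitude_le_of_ae_nonneg (h : IsReducedSolutionOn a b c μ lam u v g)
    (hbig : ∀ᵐ y ∂volume.restrict (Icc a b), 1 < c y * (lam - c y * μ ^ 2)) {p q : ℝ}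
    (hp : p ∈ Icc a b) (hq : q ∈ Icc a b) (hpq : p ≤ q)
    (hug : ∀ᵐ t ∂volume.restrict (Ioo p q), 0 ≤ u t * g t) :
    u q ^ 2 + v q ^ 2 ≤ u p ^ 2 + v p ^ 2 := by
  rw [← sub_nonpos, h.amplitude_sub_amplitude hp hq hpq]
  refine integral_nonpos_of_ae ?_
  filter_upwards [hug, ae_restrict_of_ae_restrict_of_subset
    (Ioo_subset_Icc_self.trans (Icc_subset_Icc hp.1 hq.2)) hbig] with t hut hbt
  exact mul_nonpos_of_nonneg_of_nonpos (by positivity) (by linarith)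

theorem exists_flux_eq_zero_sq_le_of_pos (h : IsReducedSolutionOn a b c μ lam u v g)
    (hc : ∀ y ∈ Icc a b, 0 < c y)
    (hbig : ∀ᵐ y ∂volume.restrict (Icc a b), 1 < c y * (lam - c y * μ ^ 2)) (hb : u b = 0)
    {x : ℝ} (hx : x ∈ Icc a b) (hxb : x < b) (hv : 0 < v x) (hu : 0 ≤ u x) :
    ∃ z ∈ Icc a b, v z = 0 ∧ u z ^ 2 ≤ u x ^ 2 + v x ^ 2 := by
  have hsub : Icc x b ⊆ Icc a b := Icc_subset_Icc hx.1 le_rfl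
  have hbI : b ∈ Icc a b := ⟨hx.1.trans hxb.le, le_rfl⟩
  have hvc := h.continuousOn_flux
  have hpos {t : ℝ} (ht : t ∈ Icc x b) (hne : ∀ s ∈ Icc x t, v s ≠ 0) : 0 < v t :=
    pos_of_forall_ne_zero_of_continuousOn ht.1
      (hvc.mono ((Icc_subset_Icc_right ht.2).trans hsub)) hv hne
  set S := {z ∈ Icc x b | v z = 0}
  have hSne : S.Nonempty := by
    by_contra hS
    have hvpos : ∀ y ∈ Ioo x b, 0 < v y := fun y hy =>
      hpos ⟨hy.1.le, hy.2.le⟩ fun s hs hvs => hS ⟨s, ⟨hs.1, hs.2.trans hy.2.le⟩, hvs⟩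
    linarith [h.lt_of_flux_pos hc hx hbI hxb hvpos]
  obtain ⟨z, ⟨hzI, hvz⟩, hzmin⟩ :=
    (hvc.mono hsub).isCompact_Icc_sep_eq_zero.exists_isLeast hSne
  have hvpos : ∀ y ∈ Ioo x z, 0 < v y := fun y hy =>
    hpos ⟨hy.1.le, hy.2.le.trans hzI.2⟩ fun s hs hvs =>
      (hy.2.trans_le' hs.2).not_ge (hzmin ⟨⟨hs.1, hs.2.trans (hy.2.le.trans hzI.2)⟩, hvs⟩)
  have hug : ∀ᵐ t ∂volume.restrict (Ioo x z), 0 ≤ u t * g t := by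
    filter_upwards [ae_restrict_mem measurableSet_Ioo,
      h.ae_pos_of_flux_pos hc hx.1 hzI.2 hvpos] with t ht hgt
    refine mul_nonneg (hu.trans (h.le_of_flux_pos hc hx (hsub ⟨ht.1.le, ht.2.le.trans hzI.2⟩)
      ht.1.le fun y hy => hvpos y ⟨hy.1, hy.2.trans ht.2⟩)) hgt.le
  have hW := h.amplitude_le_of_ae_nonneg hbig hx (hsub hzI) hzI.1 hug
  refine ⟨z, hsub hzI, hvz, ?_⟩
  rw [hvz] at hW
  linarith

theorem exists_flux_eq_zero_sq_le_of_mul_nonneg (h : IsReducedSolutionOn a b c μ lam u v g)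
    (hc : ∀ y ∈ Icc a b, 0 < c y)
    (hbig : ∀ᵐ y ∂volume.restrict (Icc a b), 1 < c y * (lam - c y * μ ^ 2)) (hb : u b = 0)
    {x : ℝ} (hx : x ∈ Icc a b) (hxb : x < b) (hv : v x ≠ 0) (huv : 0 ≤ u x * v x) :
    ∃ z ∈ Icc a b, v z = 0 ∧ u z ^ 2 ≤ u x ^ 2 + v x ^ 2 := by
  rcases hv.lt_or_gt with hv | hv
  · simpa using h.neg.exists_flux_eq_zero_sq_le_of_pos hc hbig (by simp [hb]) hx hxb
      (by simpa using hv) (by simpa using nonpos_of_mul_nonneg_left huv hv)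
  · exact h.exists_flux_eq_zero_sq_le_of_pos hc hbig hb hx hxb hv
      (nonneg_of_mul_nonneg_left huv hv)

theorem exists_flux_eq_zero_sq_le_of_mul_nonpos (h : IsReducedSolutionOn a b c μ lam u v g)
    (hc : ∀ y ∈ Icc a b, 0 < c y)
    (hbig : ∀ᵐ y ∂volume.restrict (Icc a b), 1 < c y * (lam - c y * μ ^ 2)) (ha : u a = 0)
    {x : ℝ} (hx : x ∈ Icc a b) (hax : a < x) (hv : v x ≠ 0) (huv : u x * v x ≤ 0) :
    ∃ z ∈ Icc a b, v z = 0 ∧ u z ^ 2 ≤ u x ^ 2 + v x ^ 2 := by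
  have hbig' := ae_restrict_comp_const_sub measurableSet_Icc (a + b) hbig
  rw [preimage_const_sub_Icc, add_sub_cancel_right, add_sub_cancel_left] at hbig'
  obtain ⟨z, hz, hvz, hle⟩ := h.reflect.exists_flux_eq_zero_sq_le_of_mul_nonneg
    (fun y hy => hc _ ⟨by linarith [hy.2], by linarith [hy.1]⟩) hbig'
    (by simpa using ha) (x := a + b - x) ⟨by linarith [hx.2], by linarith [hx.1]⟩
    (by linarith) (by simpa using hv) (by simpa using huv)
  exact ⟨a + b - z, ⟨by linarith [hz.2], by linarith [hz.1]⟩, by simpa using hvz,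
    by simpa using hle⟩

theorem exists_flux_eq_zero_sq_le_amplitude (h : IsReducedSolutionOn a b c μ lam u v g)
    (hab : a < b) (hc : ∀ y ∈ Icc a b, 0 < c y)
    (hbig : ∀ᵐ y ∂volume.restrict (Icc a b), 1 < c y * (lam - c y * μ ^ 2))
    (ha : u a = 0) (hb : u b = 0) {x : ℝ} (hx : x ∈ Icc a b) :
    ∃ z ∈ Icc a b, v z = 0 ∧ u z ^ 2 ≤ u x ^ 2 + v x ^ 2 := by
  by_cases hv : v x = 0
  · exact ⟨x, hx, hv, by simp [hv]⟩
  rcases le_total 0 (u x * v x) with huv | huv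
  · rcases hx.2.lt_or_eq with hxb | rfl
    · exact h.exists_flux_eq_zero_sq_le_of_mul_nonneg hc hbig hb hx hxb hv huv
    · exact h.exists_flux_eq_zero_sq_le_of_mul_nonpos hc hbig ha hx hab hv (by simp [hb])
  · rcases hx.1.lt_or_eq with hax | rfl
    · exact h.exists_flux_eq_zero_sq_le_of_mul_nonpos hc hbig ha hx hax hv huv
    · exact h.exists_flux_eq_zero_sq_le_of_mul_nonneg hc hbig hb hx hab hv (by simp [ha])

end IsReducedSolutionOn

theorem stmt10_general (cm cM H : ℝ) (hcm : 0 < cm) (hH : 0 < H)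
    (c : ℝ → ℝ) (hc : IsCoeff H cm cM c)
    (μ lam : ℝ)
    (hbig : ∀ᵐ y ∂volume.restrict (Set.Icc (0:ℝ) H), 1 < c y * (lam - c y * μ ^ 2))
    (u v g : ℝ → ℝ) (hsol : IsReducedSolutionOn 0 H c μ lam u v g)
    (hu0 : u 0 = 0) (huH : u H = 0) :
    ({y ∈ Set.Icc (0:ℝ) H | v y = 0}).Nonempty ∧
    IsCompact {y ∈ Set.Icc (0:ℝ) H | v y = 0} ∧
    ∃ y₀ ∈ {y ∈ Set.Icc (0:ℝ) H | v y = 0},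
      (∀ z ∈ {y ∈ Set.Icc (0:ℝ) H | v y = 0}, u y₀ ^ 2 ≤ u z ^ 2) ∧
      u y₀ ^ 2 = sInf ((fun y => u y ^ 2 + v y ^ 2) '' Set.Icc (0:ℝ) H) := by
  have hcpos : ∀ y ∈ Icc 0 H, 0 < c y := fun y hy => hcm.trans_le (hc.2 y hy).1
  have hu := hsol.continuousOn_sol
  have hv := hsol.continuousOn_flux
  obtain ⟨x, hx, hxmin⟩ := isCompact_Icc.exists_isMinOn (nonempty_Icc.2 hH.le)
    ((hu.pow 2).add (hv.pow 2))
  obtain ⟨z, hz, hvz, hzx⟩ :=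
    hsol.exists_flux_eq_zero_sq_le_amplitude hH hcpos hbig hu0 huH hx
  have hZ := hv.isCompact_Icc_sep_eq_zero
  obtain ⟨y₀, hy₀, hy₀min⟩ := hZ.exists_isMinOn ⟨z, hz, hvz⟩ ((hu.mono (sep_subset _ _)).pow 2)
  refine ⟨⟨z, hz, hvz⟩, hZ, y₀, hy₀, fun y hy => hy₀min hy, ?_⟩
  have hWy₀ : u x ^ 2 + v x ^ 2 ≤ u y₀ ^ 2 := by simpa [hy₀.2] using hxmin hy₀.1
  rw [IsLeast.csInf_eq ⟨mem_image_of_mem _ hx, forall_mem_image.2 fun y hy => hxmin hy⟩]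
  exact le_antisymm ((hy₀min ⟨hz, hvz⟩).trans hzx) hWy₀

/-- for high-frequency nontrivial Dirichlet solutions, the set `Z'` of
zeros of the flux is nonempty and compact, and the minimal amplitude is attained there:
`inf_{[0,H]} (u² + v²) = min_{Z'} u²`. -/
theorem stmt10 (cm cM H : ℝ) (hcm : 0 < cm) (hcmM : cm < cM) (hH : 0 < H)
    (c : ℝ → ℝ) (hc : IsCoeff H cm cM c)
    (μ lam : ℝ) (hμ : 0 < μ)
    (hbig : ∀ᵐ y ∂volume.restrict (Set.Icc (0:ℝ) H), 1 < c y * (lam - c y * μ ^ 2))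
    (u v g : ℝ → ℝ) (hsol : IsReducedSolutionOn 0 H c μ lam u v g)
    (hu0 : u 0 = 0) (huH : u H = 0) (hnt : ∃ y ∈ Set.Icc (0 : ℝ) H, u y ≠ 0) :
    ({y ∈ Set.Icc (0:ℝ) H | v y = 0}).Nonempty ∧
    IsCompact {y ∈ Set.Icc (0:ℝ) H | v y = 0} ∧
    ∃ y₀ ∈ {y ∈ Set.Icc (0:ℝ) H | v y = 0},
      (∀ z ∈ {y ∈ Set.Icc (0:ℝ) H | v y = 0}, u y₀ ^ 2 ≤ u z ^ 2) ∧
      u y₀ ^ 2 = sInf ((fun y => u y ^ 2 + v y ^ 2) '' Set.Icc (0:ℝ) H) :=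
  stmt10_general cm cM H hcm hH c hc μ lam hbig u v g hsol hu0 huH
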